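/- arXiv:2304.07358 — 4 statements merged into one kernel-verified Lean document; each statement's English description precedes it below -/
import Mathlib

section
/- Let A ∈ ℝ^{N×N} be symmetric and let P ∈ ℝ^{N×N} be an orthogonal projection matrix (P = Pᵀ = P²). Then the powers A^i converge to P as i → ∞ if and only if the following three conditions hold: A P = P, P A = P, and the spectral radius ρ(P − A) < 1. -/
/-!
If `A * P = P = P * A` and `P * P = P`, then `(A - P) ^ i = A ^ i - P` for `i ≥ 1`, so
`A ^ i → P` exactly when `(A - P) ^ i → 0`; conversely, passing to the limit in
`A ^ (i + 1) = A * A ^ i = A ^ i * A` shows that `A ^ i → P` forces `A * P = P = P * A`.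
In any complex Banach algebra, Gelfand's formula `ρ(a) = lim ‖a ^ k‖ ^ (1 / k)` shows that
`a ^ k → 0` if and only if `ρ(a) < 1`; applied to `a = A - P` viewed over `ℂ`, with
`ρ(P - A) = ρ(A - P)`, this gives the spectral condition.
-/

open Matrix Filter

/-- The spectral radius of a real square matrix: the largest modulus of a (complex)
eigenvalue, obtained by viewing the matrix over `ℂ`. -/
noncomputable def specRad {n : Type*} [Fintype n] [DecidableEq n]
    (X : Matrix n n ℝ) : ENNReal :=
  spectralRadius ℂ (X.map (algebraMap ℝ ℂ))

open Topology

theorem mul_eq_self_of_tendsto_pow {M : Type*} [Monoid M] [TopologicalSpace M] [ContinuousMul M]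
    [T2Space M] {a p : M} (h : Tendsto (a ^ ·) atTop (𝓝 p)) : a * p = p ∧ p * a = p := by
  have hsucc : Tendsto (fun n : ℕ => a ^ (n + 1)) atTop (𝓝 p) :=
    h.comp (tendsto_add_atTop_nat 1)
  constructor
  · exact tendsto_nhds_unique (by simpa only [pow_succ'] using h.const_mul a) hsucc
  · exact tendsto_nhds_unique (by simpa only [pow_succ] using h.mul_const a) hsucc

section Idempotent

variable {R : Type*} [Ring R] {a p : R}

theorem sub_pow_of_mul_eq_self (hap : a * p = p) (hpa : p * a = p) (hp : p * p = p) {n : ℕ}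
    (hn : n ≠ 0) : (a - p) ^ n = a ^ n - p := by
  have hpow : ∀ k : ℕ, p * a ^ k = p := fun k => by
    induction k with
    | zero => simp
    | succ k ih => rw [pow_succ, ← mul_assoc, ih, hpa]
  induction n with
  | zero => exact absurd rfl hn
  | succ n ih =>
    rcases eq_or_ne n 0 with rfl | hn0
    · simp
    · rw [pow_succ', ih hn0, mul_sub, sub_mul, sub_mul, hap, hpow, hp, ← pow_succ']
      abel

theorem tendsto_pow_iff_tendsto_sub_pow [TopologicalSpace R] [IsTopologicalAddGroup R]
    (hap : a * p = p) (hpa : p * a = p) (hp : p * p = p) :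
    Tendsto (a ^ ·) atTop (𝓝 p) ↔ Tendsto ((a - p) ^ ·) atTop (𝓝 0) := by
  rw [← tendsto_sub_nhds_zero_iff]
  refine tendsto_congr' ?_
  filter_upwards [eventually_ne_atTop 0] with n hn using (sub_pow_of_mul_eq_self hap hpa hp hn).symm

end Idempotent

theorem spectralRadius_neg {𝕜 A : Type*} [NormedField 𝕜] [Ring A] [Algebra 𝕜 A] (a : A) :
    spectralRadius 𝕜 (-a) = spectralRadius 𝕜 a := by
  have key : ∀ b : A, spectralRadius 𝕜 (-b) ≤ spectralRadius 𝕜 b := fun b =>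
    iSup₂_le fun k hk => le_iSup₂_of_le (-k)
      (by rwa [← neg_neg b, ← spectrum.neg_eq, Set.mem_neg, neg_neg] at hk) (by simp)
  exact le_antisymm (key a) (by simpa using key (-a))

section BanachAlgebra

variable {A : Type*} [NormedRing A] [NormedAlgebra ℂ A] [CompleteSpace A]

/-- Unlike `spectrum.spectralRadius_le_nnnorm`, this needs no `NormOneClass`: Gelfand's formula
bounds `ρ(a)` by the limit of `‖a ^ k‖ ^ (1 / k) ≤ ‖a‖`. -/
theorem spectralRadius_complex_le_nnnorm (a : A) : spectralRadius ℂ a ≤ ‖a‖₊ := by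
  refine le_of_tendsto (spectrum.pow_nnnorm_pow_one_div_tendsto_nhds_spectralRadius a) ?_
  filter_upwards [eventually_gt_atTop 0] with k hk
  rw [one_div, ENNReal.rpow_inv_le_iff (by exact_mod_cast hk), ENNReal.rpow_natCast]
  exact_mod_cast nnnorm_pow_le' a hk

theorem tendsto_pow_nhds_zero_of_spectralRadius_lt_one {a : A} (h : spectralRadius ℂ a < 1) :
    Tendsto (a ^ ·) atTop (𝓝 0) := by
  obtain ⟨r, hρr, hr1⟩ := ENNReal.lt_iff_exists_nnreal_btwn.mp h
  have hbound : ∀ᶠ n : ℕ in atTop, ‖a ^ n‖ ≤ (r : ℝ) ^ n := by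
    filter_upwards [(spectrum.pow_nnnorm_pow_one_div_tendsto_nhds_spectralRadius a).eventually
      (gt_mem_nhds hρr), eventually_gt_atTop 0] with n hn hn0
    rw [one_div, ENNReal.rpow_inv_lt_iff (by exact_mod_cast hn0), ENNReal.rpow_natCast] at hn
    exact_mod_cast hn.le
  exact squeeze_zero_norm' hbound
    (tendsto_pow_atTop_nhds_zero_of_lt_one r.2 (by exact_mod_cast hr1))

theorem spectralRadius_lt_one_of_tendsto_pow_nhds_zero {a : A}
    (h : Tendsto (a ^ ·) atTop (𝓝 0)) : spectralRadius ℂ a < 1 := by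
  have hnorm := tendsto_zero_iff_norm_tendsto_zero.mp h
  obtain ⟨n, hsmall, hn⟩ :=
    ((hnorm.eventually (gt_mem_nhds one_pos)).and (eventually_ne_atTop 0)).exists
  have : spectralRadius ℂ a ^ n < 1 := calc
    _ ≤ spectralRadius ℂ (a ^ n) := spectrum.spectralRadius_pow_le a n hn
    _ ≤ ‖a ^ n‖₊ := spectralRadius_complex_le_nnnorm _
    _ < 1 := by exact_mod_cast hsmall
  exact (pow_lt_one_iff hn).mp this

theorem spectralRadius_lt_one_iff_tendsto_pow_nhds_zero {a : A} :
    spectralRadius ℂ a < 1 ↔ Tendsto (a ^ ·) atTop (𝓝 0) :=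
  ⟨tendsto_pow_nhds_zero_of_spectralRadius_lt_one,
    spectralRadius_lt_one_of_tendsto_pow_nhds_zero⟩

end BanachAlgebra

section SpecRad

-- Any algebra norm inducing the entrywise topology would do here.
open scoped Matrix.Norms.L2Operator

variable {n : Type*} [Fintype n] [DecidableEq n]

theorem specRad_neg (X : Matrix n n ℝ) : specRad (-X) = specRad X := by
  rw [specRad, specRad, Matrix.map_neg _ (map_neg _), spectralRadius_neg]

theorem specRad_lt_one_iff_tendsto_pow_nhds_zero (X : Matrix n n ℝ) :
    specRad X < 1 ↔ Tendsto (X ^ ·) atTop (𝓝 0) := by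
  rw [specRad, spectralRadius_lt_one_iff_tendsto_pow_nhds_zero,
    (Complex.isometry_ofReal.isEmbedding.matrix_map (m := n) (n := n)).tendsto_nhds_iff]
  simp only [Function.comp_def, ← Complex.coe_algebraMap, ← Matrix.map_pow,
    Matrix.map_zero _ (map_zero _)]

end SpecRad

theorem pow_tendsto_proj_iff_general
    {N : ℕ} (A P : Matrix (Fin N) (Fin N) ℝ)
    (hPproj : P * P = P) :
    Tendsto (fun i : ℕ => A ^ i) atTop (nhds P) ↔
      (A * P = P ∧ P * A = P ∧ specRad (P - A) < 1) := by
  rw [← neg_sub, specRad_neg, specRad_lt_one_iff_tendsto_pow_nhds_zero]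
  constructor
  · intro h
    obtain ⟨hAP, hPA⟩ := mul_eq_self_of_tendsto_pow h
    exact ⟨hAP, hPA, (tendsto_pow_iff_tendsto_sub_pow hAP hPA hPproj).1 h⟩
  · rintro ⟨hAP, hPA, hsub⟩
    exact (tendsto_pow_iff_tendsto_sub_pow hAP hPA hPproj).2 hsub

/-- Let `A ∈ ℝ^{N×N}` be symmetric and `P ∈ ℝ^{N×N}` an orthogonal
projection (`P = Pᵀ = P²`). Then `A^i → P` (entrywise) as `i → ∞` if and only if
`A P = P`, `P A = P` and `ρ(P − A) < 1`. -/
theorem pow_tendsto_proj_iff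
    {N : ℕ} (A P : Matrix (Fin N) (Fin N) ℝ)
    (hA : A.IsSymm) (hPsymm : P.IsSymm) (hPproj : P * P = P) :
    Tendsto (fun i : ℕ => A ^ i) atTop (nhds P) ↔
      (A * P = P ∧ P * A = P ∧ specRad (P - A) < 1) :=
  pow_tendsto_proj_iff_general A P hPproj
end

section
/- Let U ∈ ℝ^{N×P} have full column rank, let P_U = U(UᵀU)⁻¹Uᵀ, and let A ∈ ℝ^{N×N} be symmetric and subspace-compatible with U. Then every eigenvalue of A lies in the half-open interval (−1, 1], and the fixed-point set {w ∈ ℝ^N : A w = w} equals the range space R(U); in particular, for any w ∈ ℝ^N, (I − A)w = 0 if and only if (I − P_U)w = 0. -/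
open Matrix

/-- The orthogonal projection matrix `P_U = U (UᵀU)⁻¹ Uᵀ` onto the range space of `U`. -/
noncomputable def projMat {n p : Type*} [Fintype n] [Fintype p] [DecidableEq p]
    (U : Matrix n p ℝ) : Matrix n n ℝ :=
  U * (Uᵀ * U)⁻¹ * Uᵀ

/-- A matrix `A` is subspace-compatible with `U` if `A P_U = P_U`, `P_U A = P_U`, and
`ρ(P_U − A) < 1`. -/
def SubspaceCompatible {n p : Type*} [Fintype n] [DecidableEq n] [Fintype p] [DecidableEq p]
    (U : Matrix n p ℝ) (A : Matrix n n ℝ) : Prop :=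
  A * projMat U = projMat U ∧ projMat U * A = projMat U ∧ specRad (projMat U - A) < 1

/-- mulVec by the algebra map image is scalar multiplication. -/
lemma algebraMap_mulVec {N : ℕ} (μ : ℝ) (v : Fin N → ℝ) :
    (algebraMap ℝ (Matrix (Fin N) (Fin N) ℝ) μ) *ᵥ v = μ • v := by
  rw [Matrix.algebraMap_eq_diagonal]
  ext i
  simp [Matrix.mulVec_diagonal, Pi.algebraMap_apply, Algebra.algebraMap_self_apply]

/-- A real eigenvalue of a matrix with spectral radius `< 1` has absolute value `< 1`. -/
lemma abs_lt_one_of_specRad_lt_one {N : ℕ} {B : Matrix (Fin N) (Fin N) ℝ}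
    (h : specRad B < 1) {c : ℝ} {v : Fin N → ℝ} (hv : v ≠ 0)
    (hBv : B *ᵥ v = c • v) : |c| < 1 := by
  set M := B.map (algebraMap ℝ ℂ) with hM
  have hmem : (c : ℂ) ∈ spectrum ℂ M := by
    rw [spectrum.mem_iff]
    intro hu
    have hdet : ((algebraMap ℂ (Matrix (Fin N) (Fin N) ℂ)) c - M).det ≠ 0 :=
      ((Matrix.isUnit_iff_isUnit_det _).mp hu).ne_zero
    apply hv
    have hmv : ((algebraMap ℂ (Matrix (Fin N) (Fin N) ℂ)) c - M) *ᵥ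
        (fun i => ((v i : ℂ))) = 0 := by
      ext i
      have hcoe : (M *ᵥ fun i => ((v i : ℂ))) i = ((B *ᵥ v) i : ℂ) := by
        simp [hM, Matrix.mulVec, dotProduct, Matrix.map_apply]
      rw [Matrix.sub_mulVec]
      simp only [Pi.sub_apply, Pi.zero_apply, hcoe, hBv]
      rw [Matrix.algebraMap_eq_diagonal]
      simp [Matrix.mulVec_diagonal]
    have := Matrix.eq_zero_of_mulVec_eq_zero hdet hmv
    ext i
    have := congrFun this i
    simpa using this
  have hle : (‖(c : ℂ)‖₊ : ENNReal) ≤ specRad B := by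
    rw [specRad, spectralRadius, ← hM]
    exact le_iSup₂ (f := fun k (_ : k ∈ spectrum ℂ M) => (‖k‖₊ : ENNReal)) (c : ℂ) hmem
  have hlt : (‖(c : ℂ)‖₊ : ENNReal) < 1 := lt_of_le_of_lt hle h
  have : ‖(c : ℂ)‖ < 1 := by
    rw [← ENNReal.coe_one, ENNReal.coe_lt_coe] at hlt
    exact_mod_cast hlt
  simpa [Real.norm_eq_abs] using this

/-- Let `U ∈ ℝ^{N×P}` have full column rank, `P_U = U(UᵀU)⁻¹Uᵀ`, and let
`A` be symmetric and subspace-compatible with `U`. Then every eigenvalue of `A` lies in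
`(−1, 1]`, and the fixed-point set `{w : A w = w}` equals the range space `R(U)`; in
particular `(I − A) w = 0 ↔ (I − P_U) w = 0` for every `w`. -/
theorem eigenvalues_mem_Ioc_and_fixedPoints_eq_range
    {N P : ℕ} (U : Matrix (Fin N) (Fin P) ℝ) (hU : U.rank = P)
    (A : Matrix (Fin N) (Fin N) ℝ) (hA : A.IsSymm) (hcomp : SubspaceCompatible U A) :
    (∀ μ ∈ spectrum ℝ A, μ ∈ Set.Ioc (-1 : ℝ) 1) ∧
    {w : Fin N → ℝ | A.mulVec w = w} = Set.range U.mulVec ∧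
    (∀ w : Fin N → ℝ,
      ((1 : Matrix (Fin N) (Fin N) ℝ) - A).mulVec w = 0 ↔
      ((1 : Matrix (Fin N) (Fin N) ℝ) - projMat U).mulVec w = 0) := by
  obtain ⟨h1, h2, h3⟩ := hcomp
  set Pm := projMat U with hPm
  set B := Pm - A with hB
  -- `UᵀU` is invertible
  have hrank : (Uᵀ * U).rank = P := by rw [Matrix.rank_transpose_mul_self, hU]
  have hdetUU : IsUnit (Uᵀ * U).det := by
    rw [isUnit_iff_ne_zero]
    intro hdet0
    obtain ⟨x, hx, hx0⟩ := (Matrix.exists_mulVec_eq_zero_iff).mpr hdet0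
    have hsurj : Function.Surjective (Uᵀ * U).mulVecLin := by
      rw [← LinearMap.range_eq_top]
      apply Submodule.eq_top_of_finrank_eq
      rw [← Matrix.rank, hrank]
      simp
    have hinj : Function.Injective (Uᵀ * U).mulVecLin :=
      (LinearMap.injective_iff_surjective).mpr hsurj
    apply hx
    have h0 : (Uᵀ * U).mulVecLin x = (Uᵀ * U).mulVecLin 0 := by
      rw [map_zero, Matrix.mulVecLin_apply]
      exact hx0
    exact hinj h0
  -- projection facts
  have hPmdef : Pm = U * (Uᵀ * U)⁻¹ * Uᵀ := rfl
  have hPU : Pm * U = U := by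
    rw [hPmdef, Matrix.mul_assoc, Matrix.mul_assoc,
      Matrix.nonsing_inv_mul _ hdetUU, Matrix.mul_one]
  have hPP : Pm * Pm = Pm := by
    have hsplit : Pm * Pm = Pm * U * ((Uᵀ * U)⁻¹ * Uᵀ) := by
      rw [Matrix.mul_assoc Pm U]
      congr 1
      rw [hPmdef, Matrix.mul_assoc]
    rw [hsplit, hPU, hPmdef, ← Matrix.mul_assoc]
  have hBP : B * Pm = 0 := by
    rw [hB, Matrix.sub_mul, hPP, h1, sub_self]
  -- membership of projections in the range of U
  have hProjMem : ∀ w : Fin N → ℝ, Pm *ᵥ w ∈ Set.range U.mulVec := by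
    intro w
    refine ⟨((Uᵀ * U)⁻¹ * Uᵀ) *ᵥ w, ?_⟩
    rw [Matrix.mulVec_mulVec, ← Matrix.mul_assoc]
    rfl
  have hPUvec : ∀ x : Fin P → ℝ, Pm *ᵥ (U *ᵥ x) = U *ᵥ x := by
    intro x
    rw [Matrix.mulVec_mulVec, hPU]
  -- fixed points: range direction
  have hfix_of_range : ∀ x : Fin P → ℝ, A *ᵥ (U *ᵥ x) = U *ᵥ x := by
    intro x
    have : A *ᵥ (Pm *ᵥ (U *ᵥ x)) = Pm *ᵥ (U *ᵥ x) := by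
      rw [Matrix.mulVec_mulVec, h1]
    rwa [hPUvec] at this
  -- fixed points: converse direction
  have hrange_of_fix : ∀ w : Fin N → ℝ, A *ᵥ w = w → w ∈ Set.range U.mulVec := by
    intro w hw
    set u := w - Pm *ᵥ w with hu
    have hBu : B *ᵥ u = (-1 : ℝ) • u := by
      have hBPw : B *ᵥ (Pm *ᵥ w) = 0 := by
        rw [Matrix.mulVec_mulVec, hBP, Matrix.zero_mulVec]
      rw [hu, Matrix.mulVec_sub, hBPw, sub_zero, hB, Matrix.sub_mulVec, hw]
      ext i
      simp
    by_cases hu0 : u = 0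
    · have : w = Pm *ᵥ w := by
        have := sub_eq_zero.mp (hu ▸ hu0 : w - Pm *ᵥ w = 0)
        exact this
      rw [this]
      exact hProjMem w
    · exfalso
      have := abs_lt_one_of_specRad_lt_one h3 hu0 hBu
      norm_num at this
  have hfixset : {w : Fin N → ℝ | A.mulVec w = w} = Set.range U.mulVec := by
    ext w
    constructor
    · exact fun hw => hrange_of_fix w hw
    · rintro ⟨x, rfl⟩
      exact hfix_of_range x
  -- eigenvalues
  refine ⟨?_, hfixset, ?_⟩
  · intro μ hμ
    rw [spectrum.mem_iff] at hμ
    have hdet0 : ((algebraMap ℝ (Matrix (Fin N) (Fin N) ℝ)) μ - A).det = 0 := by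
      by_contra hne
      exact hμ ((Matrix.isUnit_iff_isUnit_det _).mpr (isUnit_iff_ne_zero.mpr hne))
    obtain ⟨v, hv, hv0⟩ := (Matrix.exists_mulVec_eq_zero_iff).mpr hdet0
    have hAv : A *ᵥ v = μ • v := by
      rw [Matrix.sub_mulVec, algebraMap_mulVec, sub_eq_zero] at hv0
      exact hv0.symm
    by_cases hμ1 : μ = 1
    · exact ⟨by rw [hμ1]; norm_num, le_of_eq hμ1⟩
    · have hPv : Pm *ᵥ v = 0 := by
        have e1 : Pm *ᵥ (A *ᵥ v) = Pm *ᵥ v := by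
          rw [Matrix.mulVec_mulVec, h2]
        rw [hAv, Matrix.mulVec_smul] at e1
        have : (μ - 1) • (Pm *ᵥ v) = 0 := by
          rw [sub_smul, one_smul, e1, sub_self]
        rcases smul_eq_zero.mp this with h | h
        · exact absurd (sub_eq_zero.mp h) hμ1
        · exact h
      have hBv : B *ᵥ v = (-μ) • v := by
        rw [hB, Matrix.sub_mulVec, hPv, hAv]
        ext i
        simp
      have habs := abs_lt_one_of_specRad_lt_one h3 hv hBv
      rw [abs_neg] at habs
      have := abs_lt.mp habs
      exact ⟨this.1, le_of_lt this.2⟩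
  -- the equivalence
  · intro w
    rw [Matrix.sub_mulVec, Matrix.sub_mulVec, Matrix.one_mulVec,
      sub_eq_zero, sub_eq_zero]
    constructor
    · intro hw
      obtain ⟨x, rfl⟩ := hrange_of_fix w hw.symm
      exact (hPUvec x).symm
    · intro hw
      have : w ∈ Set.range U.mulVec := by
        rw [hw]
        exact hProjMem w
      obtain ⟨x, rfl⟩ := this
      exact (hfix_of_range x).symm
end

section
/- Let A ∈ ℝ^{N×N} be symmetric, Ā = ½(I_N + A), and let B ∈ ℝ^{N×N} satisfy B² = ½(I_N − A). Let (ψ_i)_{i≥1}, (w_i)_{i≥0}, (λ_i)_{i≥0} be sequences in ℝ^N satisfying, for all i ≥ 1, the primal–dual recursions w_i = Ā ψ_i − B λ_{i−1} and λ_i = λ_{i−1} + B w_i. Then for all i ≥ 2, w_i = Ā (w_{i−1} + ψ_i − ψ_{i−1}). -/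
open Matrix

/-- Let `A` be symmetric, `Ā = ½(I + A)`, and `B² = ½(I − A)`. If the
sequences `(ψ_i)`, `(w_i)`, `(λ_i)` satisfy the primal–dual recursions
`w_i = Ā ψ_i − B λ_{i−1}` and `λ_i = λ_{i−1} + B w_i` for all `i ≥ 1`, then for all
`i ≥ 2` we have `w_i = Ā (w_{i−1} + ψ_i − ψ_{i−1})`. -/
theorem exact_subspace_diffusion_elimination
    {N : ℕ} (A B : Matrix (Fin N) (Fin N) ℝ) (hA : A.IsSymm)
    (hB2 : B * B = (1 / 2 : ℝ) • ((1 : Matrix (Fin N) (Fin N) ℝ) - A))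
    (ψ w lam : ℕ → Fin N → ℝ)
    (hw : ∀ i, 1 ≤ i →
      w i = ((1 / 2 : ℝ) • ((1 : Matrix (Fin N) (Fin N) ℝ) + A)).mulVec (ψ i)
              - B.mulVec (lam (i - 1)))
    (hlam : ∀ i, 1 ≤ i → lam i = lam (i - 1) + B.mulVec (w i)) :
    ∀ i, 2 ≤ i →
      w i = ((1 / 2 : ℝ) • ((1 : Matrix (Fin N) (Fin N) ℝ) + A)).mulVec
              (w (i - 1) + ψ i - ψ (i - 1)) := by
  intro i hi
  obtain ⟨k, rfl⟩ : ∃ k, i = k + 2 := ⟨i - 2, by omega⟩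
  have h1 := hw (k + 2) (by omega)
  have h2 := hw (k + 1) (by omega)
  have h3 := hlam (k + 1) (by omega)
  simp only [show k + 2 - 1 = k + 1 from rfl, show k + 1 - 1 = k from rfl] at *
  have hBlam : B.mulVec (lam k)
      = ((1 / 2 : ℝ) • ((1 : Matrix (Fin N) (Fin N) ℝ) + A)).mulVec (ψ (k + 1))
        - w (k + 1) := by
    rw [h2]; abel
  rw [h1, h3, mulVec_add, hBlam, Matrix.mulVec_mulVec, hB2]
  simp only [mulVec_add, mulVec_sub, Matrix.smul_mulVec, Matrix.add_mulVec,
    Matrix.sub_mulVec, Matrix.one_mulVec]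
  module
end

section
/- Let U ∈ ℝ^{N×P} have full column rank, P_U = U(UᵀU)⁻¹Uᵀ, let A ∈ ℝ^{N×N} be symmetric and subspace-compatible with U, set Ā = ½(I_N + A), and let B be the symmetric positive semidefinite square root of ½(I_N − A). Suppose w_i = Ā w_{i−1} − μ Ā g − μ B λ for vectors w_{i−1}, g, λ ∈ ℝ^N and scalar μ. Then P_U w_i = P_U (w_{i−1} − μ g); i.e., the projection of the iterate onto R(U) evolves exactly as one step of projected gradient descent driven by g, independently of the dual variable λ. -/
open Matrix

/-- With `U` of full column rank, `A` symmetric and subspace-compatible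
with `U`, `Ā = ½(I + A)`, and `B` the symmetric PSD square root of `½(I − A)`: if
`w_i = Ā w_{i−1} − μ Ā g − μ B λ`, then `P_U w_i = P_U (w_{i−1} − μ g)`. -/
theorem proj_iterate_is_projected_gradient_step
    {N P : ℕ} (U : Matrix (Fin N) (Fin P) ℝ) (hU : U.rank = P)
    (A : Matrix (Fin N) (Fin N) ℝ) (hA : A.IsSymm) (hcomp : SubspaceCompatible U A)
    (B : Matrix (Fin N) (Fin N) ℝ) (hB : B.PosSemidef)
    (hB2 : B * B = (1 / 2 : ℝ) • ((1 : Matrix (Fin N) (Fin N) ℝ) - A))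
    (μ : ℝ) (wprev g lam wi : Fin N → ℝ)
    (hrec : wi = ((1 / 2 : ℝ) • ((1 : Matrix (Fin N) (Fin N) ℝ) + A)).mulVec wprev
        - μ • ((1 / 2 : ℝ) • ((1 : Matrix (Fin N) (Fin N) ℝ) + A)).mulVec g
        - μ • B.mulVec lam) :
    (projMat U).mulVec wi = (projMat U).mulVec (wprev - μ • g) := by
  set Q := projMat U with hQ
  -- Q is symmetric
  have hQsym : Qᵀ = Q := by
    simp only [hQ, projMat, transpose_mul, transpose_transpose, transpose_nonsing_inv,
      Matrix.mul_assoc]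
  -- Q * A = Q
  have hQA : Q * A = Q := hcomp.2.1
  -- Q * Ā = Q where Ā = ½(1+A)
  have hQAbar : Q * ((1 / 2 : ℝ) • ((1 : Matrix (Fin N) (Fin N) ℝ) + A)) = Q := by
    rw [Matrix.mul_smul, Matrix.mul_add, Matrix.mul_one, hQA]
    rw [← two_smul ℝ Q, smul_smul]
    norm_num
  -- Q * B = 0
  have hQB : Q * B = 0 := by
    have hBsym : Bᵀ = B := hB.1
    have h1 : Q * (B * B) = 0 := by
      rw [hB2, Matrix.mul_smul, Matrix.mul_sub, Matrix.mul_one, hQA, sub_self, smul_zero]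
    have h2 : (Q * B) * (Q * B)ᵀ = 0 := by
      rw [transpose_mul, hBsym, hQsym, ← Matrix.mul_assoc, Matrix.mul_assoc Q B B, h1,
        Matrix.zero_mul]
    have hct : (Q * B)ᴴ = (Q * B)ᵀ := by ext i j; simp [Matrix.conjTranspose_apply]
    exact (Matrix.self_mul_conjTranspose_eq_zero (A := Q * B)).mp (by rw [hct]; exact h2)
  have hQAbar' : Q * ((1 / 2 : ℝ) • (1 : Matrix (Fin N) (Fin N) ℝ) + (1 / 2 : ℝ) • A) = Q := by
    rw [← smul_add]; exact hQAbar
  subst hrec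
  rw [Matrix.mulVec_sub, Matrix.mulVec_sub, Matrix.mulVec_smul, Matrix.mulVec_smul,
    Matrix.mulVec_mulVec, Matrix.mulVec_mulVec, Matrix.mulVec_mulVec, hQAbar, hQB,
    Matrix.zero_mulVec, smul_zero, sub_zero, Matrix.mulVec_sub, Matrix.mulVec_smul]
end
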